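/- arXiv:1106.4411 — 5 statements merged into one kernel-verified Lean document; each statement's English description precedes it below -/
import Mathlib

section
/- Let G be a nontrivial connected finite simple graph with minimum degree δ. If G contains two adjacent vertices both of degree δ, then κ₃(G) ≤ δ − 1. -/
open SimpleGraph

/-- A family of pairwise internally disjoint `S`-trees in `G`: each `T i` is a subgraph
of `G` that is a tree containing all vertices of `S`, and any two members meet exactly
in `S` and share no edges. -/
def IsInternallyDisjointSTreeFamily {V : Type*} (G : SimpleGraph V)
    (S : Finset V) {ℓ : ℕ} (T : Fin ℓ → G.Subgraph) : Prop :=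
  (∀ i, (T i).coe.IsTree ∧ (S : Set V) ⊆ (T i).verts) ∧
  Pairwise fun i j =>
    (T i).verts ∩ (T j).verts = (S : Set V) ∧ Disjoint (T i).edgeSet (T j).edgeSet

/-- `κ(S)`: the maximum number `ℓ` of pairwise internally disjoint `S`-trees in `G`. -/
noncomputable def kappaS {V : Type*} (G : SimpleGraph V) (S : Finset V) : ℕ :=
  sSup {ℓ : ℕ | ∃ T : Fin ℓ → G.Subgraph, IsInternallyDisjointSTreeFamily G S T}

/-- `κ₃(G)`: the generalized 3-connectivity, the minimum of `κ(S)` over all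
3-element vertex subsets `S`. -/
noncomputable def kappa3 {V : Type*} (G : SimpleGraph V) : ℕ :=
  sInf {m : ℕ | ∃ S : Finset V, S.card = 3 ∧ kappaS G S = m}

section Aux

variable {V : Type*} {G : SimpleGraph V}

lemma aux_exists_neighbor (H : G.Subgraph) (hc : H.coe.Connected)
    {a b : V} (ha : a ∈ H.verts) (hb : b ∈ H.verts) (hne : a ≠ b) :
    ∃ x, H.Adj a x := by
  obtain ⟨p⟩ := hc ⟨a, ha⟩ ⟨b, hb⟩
  cases p with
  | nil => exact absurd rfl hne
  | cons h _ => exact ⟨_, h⟩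

lemma aux_walk_stays (H : G.Subgraph) {u v : V}
    (hu : ∀ x, H.Adj u x → x = v) (hv : ∀ x, H.Adj v x → x = u)
    {a b : H.verts} (p : H.coe.Walk a b)
    (ha : (a : V) = u ∨ (a : V) = v) : (b : V) = u ∨ (b : V) = v := by
  induction p with
  | nil => exact ha
  | @cons a c b h p ih =>
    apply ih
    have h' : H.Adj (a : V) (c : V) := h
    rcases ha with h1 | h1
    · rw [h1] at h'
      exact Or.inr (hu _ h')
    · rw [h1] at h'
      exact Or.inl (hv _ h')

/-- Every `S`-tree with `S = {u,v,w}` contains two distinct edges each incident to `u` or `v`. -/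
lemma aux_two_edges (H : G.Subgraph) (htree : H.coe.IsTree)
    {u v w : V} (hu : u ∈ H.verts) (hv : v ∈ H.verts) (hw : w ∈ H.verts)
    (huv : u ≠ v) (hwu : w ≠ u) (hwv : w ≠ v) :
    ∃ e₁ e₂ : Sym2 V, e₁ ≠ e₂ ∧ e₁ ∈ H.edgeSet ∧ e₂ ∈ H.edgeSet ∧
      (u ∈ e₁ ∨ v ∈ e₁) ∧ (u ∈ e₂ ∨ v ∈ e₂) := by
  have hc := htree.isConnected
  obtain ⟨x, hx⟩ := aux_exists_neighbor H hc hu hw (Ne.symm hwu)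
  obtain ⟨y, hy⟩ := aux_exists_neighbor H hc hv hw (Ne.symm hwv)
  by_cases hA : ∀ x, H.Adj u x → x = v
  · by_cases hB : ∀ y, H.Adj v y → y = u
    · -- contradiction: walk from u to w stays in {u, v}
      exfalso
      obtain ⟨p⟩ := hc ⟨u, hu⟩ ⟨w, hw⟩
      have := aux_walk_stays H hA hB p (Or.inl rfl)
      simp only [] at this
      rcases this with h | h
      · exact hwu h
      · exact hwv h
    · push_neg at hB
      obtain ⟨y', hy', hy'u⟩ := hB
      have hxv : x = v := hA _ hx
      rw [hxv] at hx
      refine ⟨s(u, v), s(v, y'), ?_, hx, hy', Or.inl (Sym2.mem_mk_left _ _),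
        Or.inr (Sym2.mem_mk_left _ _)⟩
      intro h
      have : u ∈ s(v, y') := h ▸ Sym2.mem_mk_left u v
      rcases Sym2.mem_iff.mp this with h' | h'
      · exact huv h'
      · exact hy'u h'.symm
  · push_neg at hA
    obtain ⟨x', hx', hx'v⟩ := hA
    by_cases hB : ∀ y, H.Adj v y → y = u
    · have hyu : y = u := hB _ hy
      rw [hyu] at hy
      refine ⟨s(u, x'), s(v, u), ?_, hx', hy, Or.inl (Sym2.mem_mk_left _ _),
        Or.inr (Sym2.mem_mk_left _ _)⟩
      intro h
      have : v ∈ s(u, x') := h ▸ Sym2.mem_mk_left v u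
      rcases Sym2.mem_iff.mp this with h' | h'
      · exact huv h'.symm
      · exact hx'v h'.symm
    · push_neg at hB
      obtain ⟨y', hy', hy'u⟩ := hB
      refine ⟨s(u, x'), s(v, y'), ?_, hx', hy', Or.inl (Sym2.mem_mk_left _ _),
        Or.inr (Sym2.mem_mk_left _ _)⟩
      intro h
      have : u ∈ s(v, y') := h ▸ Sym2.mem_mk_left u x'
      rcases Sym2.mem_iff.mp this with h' | h'
      · exact huv h'
      · exact hy'u h'.symm

end Aux

/-- If `G` is a nontrivial connected finite simple graph (with at least 3 vertices)
with minimum degree `δ` containing two adjacent vertices both of degree `δ`,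
then `κ₃(G) ≤ δ - 1`. -/
theorem kappa3_le_minDegree_sub_one {V : Type*} [Fintype V] (G : SimpleGraph V)
    [DecidableRel G.Adj] (hconn : G.Connected) (hcard : 3 ≤ Fintype.card V)
    (u v : V) (huv : G.Adj u v)
    (hu : G.degree u = G.minDegree) (hv : G.degree v = G.minDegree) :
    kappa3 G ≤ G.minDegree - 1 := by
  classical
  have huvne : u ≠ v := huv.ne
  -- find a third vertex
  obtain ⟨w, hw⟩ : ∃ w, w ∉ ({u, v} : Finset V) := by
    by_contra h
    push_neg at h
    have : (Finset.univ : Finset V) ⊆ {u, v} := fun a _ => h a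
    have := Finset.card_le_card this
    simp only [Finset.card_univ] at this
    have h2 : ({u, v} : Finset V).card ≤ 2 := Finset.card_insert_le _ _ |>.trans (by simp)
    omega
  simp only [Finset.mem_insert, Finset.mem_singleton, not_or] at hw
  obtain ⟨hwu, hwv⟩ := hw
  set S : Finset V := {u, v, w} with hS
  have hScard : S.card = 3 := by
    rw [hS]
    rw [Finset.card_insert_of_notMem (by simp [huvne, Ne.symm hwu]),
      Finset.card_insert_of_notMem (by simp [Ne.symm hwv])]
    simp
  have hδpos : 1 ≤ G.minDegree := by
    rw [← hu]
    have : 0 < G.degree u := by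
      rw [G.degree_pos_iff_exists_adj]
      exact ⟨v, huv⟩
    omega
  -- the pool of edges incident to u or v
  set P : Finset (Sym2 V) := G.incidenceFinset u ∪ G.incidenceFinset v with hP
  have hPinter : G.incidenceFinset u ∩ G.incidenceFinset v = {s(u, v)} := by
    ext e
    simp only [Finset.mem_inter, mem_incidenceFinset, Finset.mem_singleton]
    rw [← Set.mem_inter_iff, G.incidenceSet_inter_incidenceSet_of_adj huv]
    exact Set.mem_singleton_iff
  have hPcard : P.card + 1 = 2 * G.minDegree := by
    have := Finset.card_union_add_card_inter (G.incidenceFinset u) (G.incidenceFinset v)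
    rw [hPinter, Finset.card_singleton, G.card_incidenceFinset_eq_degree,
      G.card_incidenceFinset_eq_degree, hu, hv] at this
    rw [hP]
    omega
  have hkS : kappaS G S ≤ G.minDegree - 1 := by
    apply csSup_le'
    rintro ℓ ⟨T, hT⟩
    -- for each tree, two distinct pool edges
    have key : ∀ i : Fin ℓ, ∃ e₁ e₂ : Sym2 V, e₁ ≠ e₂ ∧ e₁ ∈ (T i).edgeSet ∧
        e₂ ∈ (T i).edgeSet ∧ (u ∈ e₁ ∨ v ∈ e₁) ∧ (u ∈ e₂ ∨ v ∈ e₂) := by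
      intro i
      obtain ⟨htree, hsub⟩ := hT.1 i
      exact aux_two_edges (T i) htree
        (hsub (by simp [hS])) (hsub (by simp [hS])) (hsub (by simp [hS]))
        huvne hwu hwv
    choose e₁ e₂ hne h₁ h₂ hp₁ hp₂ using key
    have hmemP : ∀ (i : Fin ℓ) (e : Sym2 V), e ∈ (T i).edgeSet → (u ∈ e ∨ v ∈ e) → e ∈ P := by
      intro i e he hi
      have heG : e ∈ G.edgeSet := (T i).edgeSet_subset he
      rw [hP, Finset.mem_union, mem_incidenceFinset, mem_incidenceFinset]
      rcases hi with h | h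
      · exact Or.inl ⟨heG, h⟩
      · exact Or.inr ⟨heG, h⟩
    set pairs : Fin ℓ → Finset (Sym2 V) := fun i => {e₁ i, e₂ i} with hpairs
    have hpsub : ∀ i, (pairs i : Set (Sym2 V)) ⊆ (T i).edgeSet := by
      intro i e he
      simp only [hpairs, Finset.coe_insert, Set.mem_insert_iff, Finset.coe_singleton,
        Set.mem_singleton_iff] at he
      rcases he with rfl | rfl
      · exact h₁ i
      · exact h₂ i
    have hdisj : ∀ i ∈ (Finset.univ : Finset (Fin ℓ)), ∀ j ∈ Finset.univ, i ≠ j →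
        Disjoint (pairs i) (pairs j) := by
      intro i _ j _ hij
      have hd : Disjoint (T i).edgeSet (T j).edgeSet := (hT.2 hij).2
      rw [Finset.disjoint_left]
      intro e hei hej
      exact Set.disjoint_left.mp hd (hpsub i hei) (hpsub j hej)
    have hcardsum : (Finset.univ.biUnion pairs).card = 2 * ℓ := by
      rw [Finset.card_biUnion hdisj]
      have : ∀ i, (pairs i).card = 2 := fun i => Finset.card_pair (hne i)
      simp [this, mul_comm]
    have hsubP : Finset.univ.biUnion pairs ⊆ P := by
      apply Finset.biUnion_subset.mpr
      intro i _
      intro e he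
      simp only [hpairs, Finset.mem_insert, Finset.mem_singleton] at he
      rcases he with rfl | rfl
      · exact hmemP i _ (h₁ i) (hp₁ i)
      · exact hmemP i _ (h₂ i) (hp₂ i)
    have := Finset.card_le_card hsubP
    rw [hcardsum] at this
    omega
  have hmem : kappaS G S ∈ {m : ℕ | ∃ S : Finset V, S.card = 3 ∧ kappaS G S = m} :=
    ⟨S, hScard, rfl⟩
  exact le_trans (Nat.sInf_le hmem) hkS
end

section
/- Let G be a finite simple graph containing a vertex u of degree 2 whose two neighbors w₁, w₂ are not adjacent in G, and let G′ be the graph obtained from G by smoothing u, i.e. deleting u and adding the edge w₁w₂. Then κ₃(G′) ≥ κ₃(G). -/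
open SimpleGraph

/-- Smoothing a degree-2 vertex `u` with neighbors `w₁, w₂`: delete `u` and add
the edge `w₁w₂`.  The resulting graph lives on the vertex set `{v // v ≠ u}`. -/
def smoothGraph {V : Type*} (G : SimpleGraph V) (u w₁ w₂ : V) :
    SimpleGraph {v : V // v ≠ u} :=
  SimpleGraph.fromRel fun a b => G.Adj a b ∨ ((a : V) = w₁ ∧ (b : V) = w₂)

namespace SmoothProof

variable {V : Type*} {G : SimpleGraph V} {u w₁ w₂ : V}

/-- Inclusion homomorphism from `H.coe` to `H.spanningCoe`. -/
def homSpan (H : G.Subgraph) : H.coe →g H.spanningCoe := ⟨Subtype.val, fun h => h⟩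

lemma lift_spanningCoe (H : G.Subgraph) :
    ∀ {x y : V} (q : H.spanningCoe.Walk x y) (hx : x ∈ H.verts) (hy : y ∈ H.verts),
      ∃ q' : H.coe.Walk ⟨x, hx⟩ ⟨y, hy⟩, q'.map (homSpan H) = q := by
  intro x y q
  induction q with
  | nil => intro hx hy; exact ⟨.nil, rfl⟩
  | cons h p ih =>
    intro hx hy
    have h' : H.Adj _ _ := h
    obtain ⟨q', hq'⟩ := ih h'.snd_mem hy
    exact ⟨.cons (show H.coe.Adj ⟨_, hx⟩ ⟨_, h'.snd_mem⟩ from h') q', by rw [Walk.map_cons, hq']; rfl⟩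

lemma spanningCoe_path_unique {H : G.Subgraph} (ht : H.coe.IsTree) {x y : V}
    (hx : x ∈ H.verts) (hy : y ∈ H.verts) {q₁ q₂ : H.spanningCoe.Walk x y}
    (h₁ : q₁.IsPath) (h₂ : q₂.IsPath) : q₁ = q₂ := by
  obtain ⟨Q₁, hQ₁⟩ := lift_spanningCoe H q₁ hx hy
  obtain ⟨Q₂, hQ₂⟩ := lift_spanningCoe H q₂ hx hy
  have e : Q₁ = Q₂ := by
    refine (ht.existsUnique_path ⟨x, hx⟩ ⟨y, hy⟩).unique ?_ ?_
    · rw [← hQ₁] at h₁; exact h₁.of_map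
    · rw [← hQ₂] at h₂; exact h₂.of_map
  rw [← hQ₁, ← hQ₂, e]

lemma smooth_adj_iff (a b : {v : V // v ≠ u}) :
    (smoothGraph G u w₁ w₂).Adj a b ↔
      a ≠ b ∧ (G.Adj ↑a ↑b ∨ ((a : V) = w₁ ∧ (b : V) = w₂) ∨ ((b : V) = w₁ ∧ (a : V) = w₂)) := by
  unfold smoothGraph
  rw [fromRel_adj]
  constructor
  · rintro ⟨hab, (h | h) | (h | h)⟩
    · exact ⟨hab, Or.inl h⟩
    · exact ⟨hab, Or.inr (Or.inl h)⟩
    · exact ⟨hab, Or.inl h.symm⟩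
    · exact ⟨hab, Or.inr (Or.inr h)⟩
  · rintro ⟨hab, h | h | h⟩
    · exact ⟨hab, Or.inl (Or.inl h)⟩
    · exact ⟨hab, Or.inl (Or.inr h)⟩
    · exact ⟨hab, Or.inr (Or.inr h)⟩

/-- push a subgraph of `G` to a subgraph of the smoothed graph. -/
def pushSub (u : V) (hne : w₁ ≠ w₂) (H : G.Subgraph) : (smoothGraph G u w₁ w₂).Subgraph where
  verts := {v : {v : V // v ≠ u} | ↑v ∈ H.verts}
  Adj a b := H.Adj ↑a ↑b ∨
    (H.Adj u w₁ ∧ H.Adj u w₂ ∧ (((a : V) = w₁ ∧ (b : V) = w₂) ∨ ((a : V) = w₂ ∧ (b : V) = w₁)))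
  adj_sub := by
    rintro a b (h | ⟨h1, h2, ⟨ha, hb⟩ | ⟨ha, hb⟩⟩) <;> rw [smooth_adj_iff]
    · exact ⟨fun e => (H.adj_sub h).ne (congrArg Subtype.val e), Or.inl (H.adj_sub h)⟩
    · exact ⟨fun e => hne (ha ▸ hb ▸ congrArg Subtype.val e), Or.inr (Or.inl ⟨ha, hb⟩)⟩
    · exact ⟨fun e => hne (hb ▸ ha ▸ (congrArg Subtype.val e).symm), Or.inr (Or.inr ⟨hb, ha⟩)⟩
  edge_vert := by
    rintro a b (h | ⟨h1, h2, ⟨ha, hb⟩ | ⟨ha, hb⟩⟩)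
    · exact h.fst_mem
    · show (a : V) ∈ H.verts; rw [ha]; exact h1.snd_mem
    · show (a : V) ∈ H.verts; rw [ha]; exact h2.snd_mem
  symm := by
    refine ⟨?_⟩
    rintro a b (h | ⟨h1, h2, ⟨ha, hb⟩ | ⟨ha, hb⟩⟩)
    · exact Or.inl h.symm
    · exact Or.inr ⟨h1, h2, Or.inr ⟨hb, ha⟩⟩
    · exact Or.inr ⟨h1, h2, Or.inl ⟨hb, ha⟩⟩

@[simp] lemma pushSub_mem_verts (u : V) (hne : w₁ ≠ w₂) (H : G.Subgraph) (a : {v : V // v ≠ u}) :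
    a ∈ (pushSub u hne H).verts ↔ (a : V) ∈ H.verts := Iff.rfl

lemma pushSub_adj_iff (u : V) (hne : w₁ ≠ w₂) (H : G.Subgraph) (a b : {v : V // v ≠ u}) :
    (pushSub u hne H).Adj a b ↔ H.Adj ↑a ↑b ∨
      (H.Adj u w₁ ∧ H.Adj u w₂ ∧
        (((a : V) = w₁ ∧ (b : V) = w₂) ∨ ((a : V) = w₂ ∧ (b : V) = w₁))) := Iff.rfl

lemma pushSub_edge_cases (u : V) (hne : w₁ ≠ w₂) (hw1 : w₁ ≠ u) (hw2 : w₂ ≠ u) (H : G.Subgraph)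
    {e : Sym2 {v : V // v ≠ u}} (he : e ∈ (pushSub u hne H).edgeSet) :
    Sym2.map Subtype.val e ∈ H.edgeSet ∨
      (e = s(⟨w₁, hw1⟩, ⟨w₂, hw2⟩) ∧ H.Adj u w₁ ∧ H.Adj u w₂) := by
  revert he
  induction e using Sym2.ind with
  | _ a b =>
    intro he
    rw [Subgraph.mem_edgeSet] at he
    rcases he with h | ⟨h1, h2, ⟨ha, hb⟩ | ⟨ha, hb⟩⟩
    · left; rw [Sym2.map_pair_eq, Subgraph.mem_edgeSet]; exact h
    · right
      refine ⟨?_, h1, h2⟩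
      have ha' : a = ⟨w₁, hw1⟩ := Subtype.ext ha
      have hb' : b = ⟨w₂, hw2⟩ := Subtype.ext hb
      rw [ha', hb']
    · right
      refine ⟨?_, h1, h2⟩
      have ha' : a = ⟨w₂, hw2⟩ := Subtype.ext ha
      have hb' : b = ⟨w₁, hw1⟩ := Subtype.ext hb
      rw [ha', hb']
      exact Sym2.eq_swap

lemma adj_u_iff (hnbr : G.neighborSet u = {w₁, w₂}) {x : V} :
    G.Adj u x ↔ (x = w₁ ∨ x = w₂) := by
  have h : x ∈ G.neighborSet u ↔ x ∈ ({w₁, w₂} : Set V) := by rw [hnbr]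
  simpa using h

lemma adj_uw₁ (hnbr : G.neighborSet u = {w₁, w₂}) : G.Adj u w₁ :=
  (adj_u_iff hnbr).2 (Or.inl rfl)

lemma adj_uw₂ (hnbr : G.neighborSet u = {w₁, w₂}) : G.Adj u w₂ :=
  (adj_u_iff hnbr).2 (Or.inr rfl)

lemma up_walk (H : G.Subgraph) {x y : {v : V // v ≠ u}}
    (P : (smoothGraph G u w₁ w₂).Walk x y)
    (hP : ∀ e ∈ P.edges, Sym2.map Subtype.val e ∈ H.edgeSet) :
    ∃ Q : H.spanningCoe.Walk ↑x ↑y,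
      Q.length = P.length ∧ Q.support = P.support.map Subtype.val ∧ (P.IsPath → Q.IsPath) := by
  classical
  have hK : ∀ e ∈ P.edges,
      e ∈ (SimpleGraph.comap (⇑(Function.Embedding.subtype fun v => v ≠ u)) H.spanningCoe).edgeSet := by
    intro e he
    revert he
    induction e using Sym2.ind with
    | _ a b =>
      intro he
      have := hP _ he
      rw [Sym2.map_pair_eq, Subgraph.mem_edgeSet] at this
      exact this
  have hinj : Function.Injective
      ⇑(SimpleGraph.Embedding.comap (Function.Embedding.subtype fun v => v ≠ u) H.spanningCoe).toHom :=
    fun a b hab => Subtype.ext hab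
  refine ⟨(P.transfer _ hK).map
    (SimpleGraph.Embedding.comap (Function.Embedding.subtype fun v => v ≠ u) H.spanningCoe).toHom,
    ?_, ?_, ?_⟩
  · exact (Walk.length_map _ _).trans (Walk.length_transfer _ _)
  · exact (Walk.support_map _ _).trans (by rw [Walk.support_transfer]; rfl)
  · intro hp
    exact Walk.map_isPath_of_injective hinj (hp.transfer hK)

lemma down_walk (hnbr : G.neighborSet u = {w₁, w₂}) (hne : w₁ ≠ w₂) (H : G.Subgraph) :
    ∀ (n : ℕ) {x y : V} (q : H.spanningCoe.Walk x y), q.length ≤ n → q.IsPath →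
      ∀ (hx : x ≠ u) (hy : y ≠ u), x ∈ H.verts →
      ∃ q' : (smoothGraph G u w₁ w₂).Walk ⟨x, hx⟩ ⟨y, hy⟩, q'.toSubgraph ≤ pushSub u hne H := by
  intro n
  induction n with
  | zero =>
    intro x y q hq hp hx hy hxv
    cases q with
    | nil => exact ⟨.nil, (singletonSubgraph_le_iff _ _).2 hxv⟩
    | cons h q => simp [Walk.length_cons] at hq
  | succ n ih =>
    intro x y q hq hp hx hy hxv
    cases q with
    | nil => exact ⟨.nil, (singletonSubgraph_le_iff _ _).2 hxv⟩
    | cons h q =>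
      rename_i c
      have h' : H.Adj x c := h
      by_cases hc : c = u
      · cases q with
        | nil => exact absurd hc hy
        | cons h₂ q₂ =>
          rename_i d
          have h'u : H.Adj x u := by rw [hc] at h'; exact h'
          have h₂' : H.Adj u d := by
            have h₂'' : H.Adj c d := h₂
            rw [hc] at h₂''; exact h₂''
          have hd : d ≠ u := fun e => (H.adj_sub h₂').ne e.symm
          have hxd : x ≠ d := by
            have hp' := hp
            rw [Walk.cons_isPath_iff] at hp'
            exact fun e => hp'.2 (by
              rw [e, Walk.support_cons]
              exact List.mem_cons_of_mem _ q₂.start_mem_support)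
          have hx12 : x = w₁ ∨ x = w₂ := (adj_u_iff hnbr).1 (H.adj_sub h'u).symm
          have hd12 : d = w₁ ∨ d = w₂ := (adj_u_iff hnbr).1 (H.adj_sub h₂')
          have hpadj : (pushSub u hne H).Adj ⟨x, hx⟩ ⟨d, hd⟩ := by
            rw [pushSub_adj_iff u]
            rcases hx12 with hx1 | hx2 <;> rcases hd12 with hd1 | hd2
            · exact absurd (hx1.trans hd1.symm) hxd
            · exact Or.inr ⟨hx1 ▸ h'u.symm, hd2 ▸ h₂', Or.inl ⟨hx1, hd2⟩⟩
            · exact Or.inr ⟨hd1 ▸ h₂', hx2 ▸ h'u.symm, Or.inr ⟨hx2, hd1⟩⟩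
            · exact absurd (hx2.trans hd2.symm) hxd
          obtain ⟨q', hq'⟩ := ih q₂ (by
              simp only [Walk.length_cons] at hq; omega)
            (hp.of_cons.of_cons) hd hy h₂'.snd_mem
          refine ⟨Walk.cons ((pushSub u hne H).adj_sub hpadj) q', ?_⟩
          simp only [Walk.toSubgraph]
          exact sup_le (subgraphOfAdj_le_of_adj _ hpadj) hq'
      · have hpadj : (pushSub u hne H).Adj ⟨x, hx⟩ ⟨c, hc⟩ := by
          rw [pushSub_adj_iff u]; exact Or.inl h'
        obtain ⟨q', hq'⟩ := ih q (by
            simp only [Walk.length_cons] at hq; omega)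
          hp.of_cons hc hy h'.snd_mem
        refine ⟨Walk.cons ((pushSub u hne H).adj_sub hpadj) q', ?_⟩
        simp only [Walk.toSubgraph]
        exact sup_le (subgraphOfAdj_le_of_adj _ hpadj) hq'

lemma cycle_first_edge {V₂ : Type*} {Gr : SimpleGraph V₂} {v : V₂} {p : Gr.Walk v v}
    (hc : p.IsCycle) :
    ∃ (b : V₂) (h : Gr.Adj v b) (P : Gr.Walk b v), P.IsPath ∧ 2 ≤ P.length ∧
      s(v, b) ∈ p.edges ∧ ∀ f ∈ P.edges, f ∈ p.edges := by
  cases p with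
  | nil => exact absurd hc Walk.IsCycle.not_of_nil
  | cons h P =>
    rename_i b
    have h3 := hc.three_le_length
    rw [Walk.cons_isCycle_iff] at hc
    refine ⟨b, h, P, hc.1, ?_, ?_, ?_⟩
    · rw [Walk.length_cons] at h3; omega
    · rw [Walk.edges_cons]; exact List.mem_cons_self
    · intro f hf; rw [Walk.edges_cons]; exact List.mem_cons_of_mem _ hf

lemma cycle_spec {V₂ : Type*} {Gr : SimpleGraph V₂} {v A B : V₂} (hAB : A ≠ B)
    {p : Gr.Walk v v} (hc : p.IsCycle) (he : s(A, B) ∈ p.edges) :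
    ∃ P : Gr.Walk A B, s(A, B) ∉ P.edges ∧ ∀ f ∈ P.edges, f ∈ p.edges := by
  classical
  have hA : A ∈ p.support := p.fst_mem_support_of_mem_edges he
  have hqc : (p.rotate A hA).IsCycle := hc.rotate hA
  have hrot := p.rotate_edges A hA
  have hsub : ∀ f ∈ (p.rotate A hA).edges, f ∈ p.edges := fun f hf => (hrot.mem_iff).1 hf
  have heq : s(A, B) ∈ (p.rotate A hA).edges := (hrot.mem_iff).2 he
  generalize (p.rotate A hA) = q at hqc hsub heq
  cases q with
  | nil => exact absurd hqc Walk.IsCycle.not_of_nil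
  | cons h₁ Q =>
    rename_i b
    rw [Walk.cons_isCycle_iff] at hqc
    obtain ⟨hQp, hfe⟩ := hqc
    by_cases hb : b = B
    · subst hb
      refine ⟨Q.reverse, ?_, ?_⟩
      · rw [Walk.edges_reverse]
        exact fun hmem => hfe (List.mem_reverse.1 hmem)
      · intro f hf
        rw [Walk.edges_reverse] at hf
        exact hsub _ (by rw [Walk.edges_cons]; exact List.mem_cons_of_mem _ (List.mem_reverse.1 hf))
    · have hABb : s(A, B) ≠ s(A, b) := by
        intro hh
        rw [Sym2.eq_iff] at hh
        rcases hh with ⟨-, hBb⟩ | ⟨hAb, hBA⟩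
        · exact hb hBb.symm
        · exact hAB hBA.symm
      have heQ : s(A, B) ∈ Q.edges := by
        rw [Walk.edges_cons] at heq
        rcases List.mem_cons.1 heq with h | h
        · exact absurd h hABb
        · exact h
      have hBQ : B ∈ Q.support := Q.snd_mem_support_of_mem_edges heQ
      by_cases hD : s(A, B) ∈ (Q.dropUntil B hBQ).edges
      · have hnodup : Q.edges.Nodup := hQp.isTrail.edges_nodup
        have hspec : Q.edges = (Q.takeUntil B hBQ).edges ++ (Q.dropUntil B hBQ).edges := by
          have h := congrArg Walk.edges (Q.take_spec hBQ)
          rw [Walk.edges_append] at h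
          exact h.symm
        have hT : s(A, B) ∉ (Q.takeUntil B hBQ).edges := by
          rw [hspec] at hnodup
          exact fun hmem => (List.disjoint_of_nodup_append hnodup) hmem hD
        refine ⟨Walk.cons h₁ (Q.takeUntil B hBQ), ?_, ?_⟩
        · rw [Walk.edges_cons]
          intro h
          rcases List.mem_cons.1 h with h | h
          · exact hABb (by rw [h])
          · exact hT h
        · intro f hf
          rw [Walk.edges_cons] at hf
          rcases List.mem_cons.1 hf with hfh | hf'
          · rw [hfh]
            exact hsub _ (by rw [Walk.edges_cons]; exact List.mem_cons_self)
          · exact hsub _ (by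
              rw [Walk.edges_cons]
              exact List.mem_cons_of_mem _ (Q.edges_takeUntil_subset hBQ hf'))
      · refine ⟨(Q.dropUntil B hBQ).reverse, ?_, ?_⟩
        · rw [Walk.edges_reverse]
          exact fun hmem => hD (List.mem_reverse.1 hmem)
        · intro f hf
          rw [Walk.edges_reverse] at hf
          exact hsub _ (by
            rw [Walk.edges_cons]
            exact List.mem_cons_of_mem _ (Q.edges_dropUntil_subset hBQ (List.mem_reverse.1 hf)))

lemma pushSub_isTree (hnbr : G.neighborSet u = {w₁, w₂}) (hne : w₁ ≠ w₂)
    (hnadj : ¬ G.Adj w₁ w₂) (H : G.Subgraph) (ht : H.coe.IsTree)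
    (hz : ∃ z, z ∈ H.verts ∧ z ≠ u) : (pushSub u hne H).coe.IsTree := by
  classical
  obtain ⟨z, hz1, hz2⟩ := hz
  have hw1u : w₁ ≠ u := (adj_uw₁ hnbr).ne'
  have hw2u : w₂ ≠ u := (adj_uw₂ hnbr).ne'
  have huw2 : u ≠ w₂ := (adj_uw₂ hnbr).ne
  constructor
  · -- Connected
    rw [← Subgraph.connected_iff', Subgraph.connected_iff_forall_exists_walk_subgraph]
    refine ⟨⟨⟨z, hz2⟩, hz1⟩, ?_⟩
    intro a b ha hb
    obtain ⟨W⟩ := ht.isConnected.preconnected ⟨(↑a : V), ha⟩ ⟨(↑b : V), hb⟩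
    let Q0 : H.spanningCoe.Walk ↑a ↑b := W.map (homSpan H)
    obtain ⟨q', hq'⟩ := down_walk hnbr hne H (Q0.toPath : H.spanningCoe.Walk ↑a ↑b).length
      (Q0.toPath : H.spanningCoe.Walk ↑a ↑b) le_rfl Q0.toPath.2 a.2 b.2 ha
    exact ⟨q', hq'⟩
  · -- Acyclic
    intro x c hc
    have hinj : Function.Injective ((pushSub u hne H).hom) := Subgraph.hom_injective
    have hpc : (c.map (pushSub u hne H).hom).IsCycle := (Walk.map_isCycle_iff_of_injective hinj).2 hc
    have hsub : (c.map (pushSub u hne H).hom).toSubgraph ≤ pushSub u hne H := by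
      rw [Walk.toSubgraph_map]
      exact Subgraph.coeSubgraph_le c.toSubgraph
    have hedge : ∀ e ∈ (c.map (pushSub u hne H).hom).edges, e ∈ (pushSub u hne H).edgeSet :=
      fun e he => Subgraph.edgeSet_mono hsub ((Walk.mem_edges_toSubgraph _).2 he)
    by_cases hsp : s((⟨w₁, hw1u⟩ : {v : V // v ≠ u}), (⟨w₂, hw2u⟩ : {v : V // v ≠ u}))
        ∈ (c.map (pushSub u hne H).hom).edges
    · -- the special edge occurs in the cycle
      have hWW : (pushSub u hne H).Adj ⟨w₁, hw1u⟩ ⟨w₂, hw2u⟩ :=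
        (Subgraph.mem_edgeSet).1 (hedge _ hsp)
      have hu12 : H.Adj u w₁ ∧ H.Adj u w₂ := by
        rcases (pushSub_adj_iff u hne H _ _).1 hWW with h | ⟨h1, h2, -⟩
        · exact absurd (H.adj_sub h) hnadj
        · exact ⟨h1, h2⟩
      have hW12 : (⟨w₁, hw1u⟩ : {v : V // v ≠ u}) ≠ ⟨w₂, hw2u⟩ :=
        fun e => hne (congrArg Subtype.val e)
      obtain ⟨P, hPn, hPsub⟩ := cycle_spec hW12 hpc hsp
      have hedgeP : ∀ e ∈ P.edges, Sym2.map Subtype.val e ∈ H.edgeSet := by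
        intro e he
        rcases pushSub_edge_cases u hne hw1u hw2u H (hedge _ (hPsub _ he)) with hh | ⟨heeq, -, -⟩
        · exact hh
        · exact absurd (heeq ▸ he) hPn
      obtain ⟨Q, hQlen, hQsupp, -⟩ := up_walk H P hedgeP
      have hu_not : u ∉ Q.support := by
        rw [hQsupp]
        intro hmem
        simp only [List.mem_map] at hmem
        obtain ⟨a, -, ha⟩ := hmem
        exact a.2 ha
      have huB : u ∉ (Q.toPath : H.spanningCoe.Walk w₁ w₂).support :=
        fun hm => hu_not (Q.support_toPath_subset hm)
      have hApath : (Walk.cons (show H.spanningCoe.Adj w₁ u from hu12.1.symm)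
          (Walk.cons (show H.spanningCoe.Adj u w₂ from hu12.2) Walk.nil)).IsPath := by
        rw [Walk.isPath_def]
        simp [hw1u, hne, huw2]
      have hBpath : (Q.toPath : H.spanningCoe.Walk w₁ w₂).IsPath := Q.toPath.2
      have hEq := spanningCoe_path_unique ht hu12.1.snd_mem hu12.2.snd_mem hApath hBpath
      have hmem : u ∈ (Q.toPath : H.spanningCoe.Walk w₁ w₂).support := by
        rw [← hEq]; simp [Walk.support_cons]
      exact huB hmem
    · -- no special edge
      obtain ⟨b, hvb, P, hPp, hPlen, hfst, hPsub⟩ := cycle_first_edge hpc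
      have hzspec : s(((pushSub u hne H).hom) x, b) ≠
          s((⟨w₁, hw1u⟩ : {v : V // v ≠ u}), ⟨w₂, hw2u⟩) := fun e => hsp (e ▸ hfst)
      have hzb : H.Adj ↑(((pushSub u hne H).hom) x) ↑b := by
        rcases pushSub_edge_cases u hne hw1u hw2u H (hedge _ hfst) with hh | ⟨heeq, -, -⟩
        · rw [Sym2.map_pair_eq, Subgraph.mem_edgeSet] at hh; exact hh
        · exact absurd heeq hzspec
      have hedgeP : ∀ e ∈ P.edges, Sym2.map Subtype.val e ∈ H.edgeSet := by
        intro e he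
        rcases pushSub_edge_cases u hne hw1u hw2u H (hedge _ (hPsub _ he)) with hh | ⟨heeq, -, -⟩
        · exact hh
        · exact absurd (heeq ▸ hPsub _ he) hsp
      obtain ⟨Q, hQlen, -, hQpath⟩ := up_walk H P hedgeP
      have hEq := spanningCoe_path_unique ht hzb.snd_mem hzb.fst_mem
        (Path.singleton (G := H.spanningCoe) hzb.symm).2 (hQpath hPp)
      have hlen := congrArg Walk.length hEq
      rw [hQlen] at hlen
      simp only [Path.singleton, Walk.length_cons, Walk.length_nil] at hlen
      change 0 + 1 = P.length at hlen
      omega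

lemma zero_mem_family {V₂ : Type*} (G₂ : SimpleGraph V₂) (S : Finset V₂) :
    ∃ T : Fin 0 → G₂.Subgraph, IsInternallyDisjointSTreeFamily G₂ S T :=
  ⟨fun i => i.elim0, fun i => i.elim0, fun i _ _ => i.elim0⟩

lemma family_bddAbove {V₂ : Type*} [Fintype V₂] (G₂ : SimpleGraph V₂) (S : Finset V₂)
    (hS : 2 ≤ S.card) :
    BddAbove {ℓ : ℕ | ∃ T : Fin ℓ → G₂.Subgraph, IsInternallyDisjointSTreeFamily G₂ S T} := by
  classical
  refine ⟨Fintype.card (Sym2 V₂), ?_⟩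
  rintro ℓ ⟨T, hT1, hT2⟩
  have hedge : ∀ i, ∃ e, e ∈ (T i).edgeSet := by
    intro i
    obtain ⟨x, hx, y, hy, hxy⟩ := Finset.one_lt_card.mp hS
    have hx' : x ∈ (T i).verts := (hT1 i).2 hx
    have hy' : y ∈ (T i).verts := (hT1 i).2 hy
    obtain ⟨W⟩ := (hT1 i).1.isConnected.preconnected ⟨x, hx'⟩ ⟨y, hy'⟩
    have hne' : (⟨x, hx'⟩ : (T i).verts) ≠ ⟨y, hy'⟩ := fun e => hxy (congrArg Subtype.val e)
    have hnn : ¬W.Nil := Walk.not_nil_of_ne hne'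
    have hadj : (T i).coe.Adj ⟨x, hx'⟩ (W.getVert 1) := W.adj_snd hnn
    exact ⟨s(x, ↑(W.getVert 1)), (Subgraph.mem_edgeSet).2 hadj⟩
  choose e he using hedge
  have hinj : Function.Injective e := by
    intro i j hij
    by_contra hne2
    exact Set.disjoint_left.mp (hT2 hne2).2 (he i) (hij ▸ he j)
  calc ℓ = Fintype.card (Fin ℓ) := (Fintype.card_fin ℓ).symm
    _ ≤ Fintype.card (Sym2 V₂) := Fintype.card_le_of_injective e hinj

lemma family_push [DecidableEq V] (hnbr : G.neighborSet u = {w₁, w₂}) (hne : w₁ ≠ w₂)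
    (hnadj : ¬ G.Adj w₁ w₂) (S' : Finset {v : V // v ≠ u}) (hS' : S'.card = 3)
    {ℓ : ℕ} (T : Fin ℓ → G.Subgraph)
    (hT : IsInternallyDisjointSTreeFamily G (S'.image Subtype.val) T) :
    IsInternallyDisjointSTreeFamily (smoothGraph G u w₁ w₂) S'
      (fun i => pushSub u hne (T i)) := by
  classical
  have hw1u : w₁ ≠ u := (adj_uw₁ hnbr).ne'
  have hw2u : w₂ ≠ u := (adj_uw₂ hnbr).ne'
  have hS'ne : S'.Nonempty := Finset.card_pos.mp (by rw [hS']; norm_num)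
  obtain ⟨s₀, hs₀⟩ := hS'ne
  constructor
  · intro i
    constructor
    · refine pushSub_isTree hnbr hne hnadj (T i) (hT.1 i).1 ⟨↑s₀, ?_, s₀.2⟩
      exact (hT.1 i).2 (Finset.mem_coe.2 (Finset.mem_image_of_mem _ hs₀))
    · intro a ha
      exact (hT.1 i).2 (Finset.mem_coe.2 (Finset.mem_image_of_mem _ (Finset.mem_coe.1 ha)))
  · intro i j hij
    have hvij := (hT.2 hij).1
    have heij := (hT.2 hij).2
    constructor
    · ext a
      simp only [Set.mem_inter_iff, pushSub_mem_verts, Finset.mem_coe]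
      constructor
      · rintro ⟨hai, haj⟩
        have hmm : (↑a : V) ∈ (T i).verts ∩ (T j).verts := ⟨hai, haj⟩
        rw [hvij] at hmm
        simp only [Finset.coe_image, Set.mem_image, Finset.mem_coe] at hmm
        obtain ⟨b, hb, hba⟩ := hmm
        rwa [← Subtype.ext hba]
      · intro ha
        have hmm : (↑a : V) ∈ ((S'.image Subtype.val : Finset V) : Set V) := by
          simp only [Finset.coe_image, Set.mem_image, Finset.mem_coe]
          exact ⟨a, ha, rfl⟩
        rw [← hvij] at hmm
        exact ⟨hmm.1, hmm.2⟩
    · rw [Set.disjoint_left]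
      intro e hei hej
      rcases pushSub_edge_cases u hne hw1u hw2u (T i) hei with hi | ⟨hieq, hiu1, -⟩
      · rcases pushSub_edge_cases u hne hw1u hw2u (T j) hej with hj | ⟨hjeq, -, -⟩
        · exact Set.disjoint_left.mp heij hi hj
        · rw [hjeq, Sym2.map_pair_eq, Subgraph.mem_edgeSet] at hi
          exact hnadj ((T i).adj_sub hi)
      · rcases pushSub_edge_cases u hne hw1u hw2u (T j) hej with hj | ⟨hjeq, hju1, -⟩
        · rw [hieq, Sym2.map_pair_eq, Subgraph.mem_edgeSet] at hj
          exact hnadj ((T j).adj_sub hj)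
        · have hmm : u ∈ ((S'.image Subtype.val : Finset V) : Set V) :=
            hvij ▸ ⟨hiu1.fst_mem, hju1.fst_mem⟩
          simp only [Finset.coe_image, Set.mem_image, Finset.mem_coe] at hmm
          obtain ⟨b, -, hbu⟩ := hmm
          exact b.2 hbu

lemma kappaS_le [Fintype V] [DecidableEq V] (hnbr : G.neighborSet u = {w₁, w₂}) (hne : w₁ ≠ w₂)
    (hnadj : ¬ G.Adj w₁ w₂) (S' : Finset {v : V // v ≠ u}) (hS' : S'.card = 3) :
    kappaS G (S'.image Subtype.val) ≤ kappaS (smoothGraph G u w₁ w₂) S' := by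
  classical
  refine csSup_le_csSup ?_ ⟨0, zero_mem_family G (S'.image Subtype.val)⟩ ?_
  · exact family_bddAbove _ S' (by rw [hS']; norm_num)
  · rintro ℓ ⟨T, hT⟩
    exact ⟨fun i => pushSub u hne (T i), family_push hnbr hne hnadj S' hS' T hT⟩

end SmoothProof

/-- Let `G` be a finite simple graph (with at least 4 vertices, so that both `G` and
the smoothed graph have at least 3 vertices) containing a vertex `u` of degree 2
whose two neighbors `w₁ ≠ w₂` are nonadjacent in `G`.  If `G'` is obtained from `G`
by smoothing `u` (deleting `u` and adding the edge `w₁w₂`), then `κ₃(G') ≥ κ₃(G)`. -/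
theorem kappa3_smooth_ge {V : Type*} [Fintype V] (G : SimpleGraph V)
    (hcard : 4 ≤ Fintype.card V) (u w₁ w₂ : V)
    (hnbr : G.neighborSet u = {w₁, w₂}) (hne : w₁ ≠ w₂) (hnadj : ¬ G.Adj w₁ w₂) :
    kappa3 G ≤ kappa3 (smoothGraph G u w₁ w₂) := by
  classical
  -- build some 3-element subset of the smoothed vertex type
  have humem : u ∈ (Finset.univ : Finset V) := Finset.mem_univ u
  have hcard' : 3 ≤ ((Finset.univ : Finset V).erase u).card := by
    rw [Finset.card_erase_of_mem humem, Finset.card_univ]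
    omega
  obtain ⟨S₀, hS₀sub, hS₀card⟩ := Finset.exists_subset_card_eq hcard'
  have hS₀ne : ∀ x ∈ S₀, x ≠ u := fun x hx => Finset.ne_of_mem_erase (hS₀sub hx)
  let emb : {x // x ∈ S₀} ↪ {v : V // v ≠ u} :=
    ⟨fun x => ⟨x.1, hS₀ne _ x.2⟩, fun a b h => Subtype.ext (by exact congrArg (Subtype.val : {v : V // v ≠ u} → V) h)⟩
  let S₁ : Finset {v : V // v ≠ u} := S₀.attach.map emb
  have hS₁card : S₁.card = 3 := by
    rw [Finset.card_map, Finset.card_attach, hS₀card]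
  have hNE : {m : ℕ | ∃ S : Finset {v : V // v ≠ u}, S.card = 3 ∧
      kappaS (smoothGraph G u w₁ w₂) S = m}.Nonempty :=
    ⟨kappaS (smoothGraph G u w₁ w₂) S₁, S₁, hS₁card, rfl⟩
  obtain ⟨S', hS'3, hS'k⟩ :
      ∃ S : Finset {v : V // v ≠ u}, S.card = 3 ∧
        kappaS (smoothGraph G u w₁ w₂) S = kappa3 (smoothGraph G u w₁ w₂) :=
    Nat.sInf_mem hNE
  calc kappa3 G ≤ kappaS G (S'.image Subtype.val) := by
        refine Nat.sInf_le ⟨S'.image Subtype.val, ?_, rfl⟩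
        rw [Finset.card_image_of_injective _ Subtype.val_injective, hS'3]
    _ ≤ kappaS (smoothGraph G u w₁ w₂) S' := SmoothProof.kappaS_le hnbr hne hnadj S' hS'3
    _ = kappa3 (smoothGraph G u w₁ w₂) := hS'k
end

section
/- If G is a finite simple graph of order n (number of vertices) and size e(G) (number of edges) with κ₃(G) = 2, then e(G) ≥ (6/5)·n, i.e. 5·e(G) ≥ 6·n. -/
open SimpleGraph

section Aux

variable {V : Type*} {G : SimpleGraph V}

/-- In a connected subgraph containing two distinct vertices, the first has a neighbor. -/
lemma aux_exists_adj (H : G.Subgraph) (hc : H.coe.Connected) {v w : V}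
    (hv : v ∈ H.verts) (hw : w ∈ H.verts) (hne : v ≠ w) : ∃ x, H.Adj v x := by
  obtain ⟨p⟩ := hc.preconnected ⟨v, hv⟩ ⟨w, hw⟩
  have hnil : ¬ p.Nil :=
    SimpleGraph.Walk.not_nil_of_ne (fun hh => hne (congrArg Subtype.val hh))
  obtain ⟨x, hadj, -, -⟩ := SimpleGraph.Walk.not_nil_iff.mp hnil
  exact ⟨x.1, hadj⟩

/-- If `{u, v}` is "closed" in a connected subgraph, then the subgraph cannot contain a
third vertex. -/
lemma aux_closed (H : G.Subgraph) (hc : H.coe.Connected) {u v w : V}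
    (hv : v ∈ H.verts) (hw : w ∈ H.verts) (hwv : w ≠ v) (hwu : w ≠ u)
    (hu_nb : ∀ x, H.Adj u x → x = v) (hv_nb : ∀ y, H.Adj v y → y = u) : False := by
  have key : ∀ (x y : H.verts) (_ : H.coe.Walk x y), y.1 = v → x.1 = v ∨ x.1 = u := by
    intro x y p
    induction p with
    | nil => intro hx; exact Or.inl hx
    | @cons a b c h q ih =>
      intro hyv
      rcases ih hyv with hb | hb
      · right
        have : H.Adj a.1 v := by rw [← hb]; exact h
        exact hv_nb a.1 this.symm
      · left
        have : H.Adj a.1 u := by rw [← hb]; exact h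
        exact hu_nb a.1 this.symm
  obtain ⟨p⟩ := hc.preconnected ⟨w, hw⟩ ⟨v, hv⟩
  rcases key _ _ p rfl with hh | hh
  · exact hwv hh
  · exact hwu hh

/-- Core contradiction: two edge-disjoint connected subgraphs through `u, v, w`, where
`u, v` are adjacent degree-two-style vertices and the edge `uv` is not in `B`. -/
lemma aux_core (A B : G.Subgraph) (hA : A.coe.Connected) (hB : B.coe.Connected)
    {u v w a b : V}
    (huv : u ≠ v) (hwv : w ≠ v) (hwu : w ≠ u)
    (hav : a ≠ v) (hbu : b ≠ u)
    (hu_nbhd : ∀ x, G.Adj u x → x = v ∨ x = a)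
    (hv_nbhd : ∀ y, G.Adj v y → y = u ∨ y = b)
    (huA : u ∈ A.verts) (hvA : v ∈ A.verts) (hwA : w ∈ A.verts)
    (huB : u ∈ B.verts) (hvB : v ∈ B.verts)
    (hdisj : Disjoint A.edgeSet B.edgeSet)
    (huvB : s(u, v) ∉ B.edgeSet) : False := by
  -- B has an edge at u; it must go to a
  obtain ⟨x, hxB⟩ := aux_exists_adj B hB huB hvB huv
  have hxa : x = a := by
    rcases hu_nbhd x hxB.adj_sub with hx | hx
    · exact absurd (by rw [← hx]; exact hxB) huvB
    · exact hx
  subst hxa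
  have huaB : s(u, x) ∈ B.edgeSet := hxB
  -- B has an edge at v; it must go to b
  obtain ⟨y, hyB⟩ := aux_exists_adj B hB hvB huB huv.symm
  have hyb : y = b := by
    rcases hv_nbhd y hyB.adj_sub with hy | hy
    · exfalso; apply huvB
      have : B.Adj v u := by rw [← hy]; exact hyB
      exact (Subgraph.mem_edgeSet).mpr this.symm
    · exact hy
  subst hyb
  have hvbB : s(v, y) ∈ B.edgeSet := hyB
  -- in A, the only possible neighbor of u is v
  have hu_A : ∀ z, A.Adj u z → z = v := by
    intro z hz
    rcases hu_nbhd z hz.adj_sub with hz' | hz'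
    · exact hz'
    · exfalso
      subst hz'
      exact (Set.disjoint_left.mp hdisj (Subgraph.mem_edgeSet.mpr hz)) huaB
  -- in A, the only possible neighbors of v are u and b; b is impossible
  have hv_A : ∀ z, A.Adj v z → z = u := by
    intro z hz
    rcases hv_nbhd z hz.adj_sub with hz' | hz'
    · exact hz'
    · exfalso
      subst hz'
      exact (Set.disjoint_left.mp hdisj (Subgraph.mem_edgeSet.mpr hz)) hvbB
  exact aux_closed A hA hvA hwA hwv hwu hu_A hv_A

/-- From `2 ≤ kappaS G S` extract a family of two internally disjoint `S`-trees. -/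
lemma aux_exists_two_trees {S : Finset V} (h2 : 2 ≤ kappaS G S) :
    ∃ T : Fin 2 → G.Subgraph, IsInternallyDisjointSTreeFamily G S T := by
  by_contra hno
  have h0 : (0 : ℕ) ∈ {ℓ : ℕ | ∃ T : Fin ℓ → G.Subgraph,
      IsInternallyDisjointSTreeFamily G S T} := by
    refine ⟨fun i => i.elim0, ⟨fun i => i.elim0, fun i _ _ => i.elim0⟩⟩
  have hbd : ∀ ℓ ∈ {ℓ : ℕ | ∃ T : Fin ℓ → G.Subgraph,
      IsInternallyDisjointSTreeFamily G S T}, ℓ ≤ 1 := by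
    intro ℓ hℓ
    by_contra hgt
    push_neg at hgt
    obtain ⟨T, hT⟩ := hℓ
    refine hno ⟨T ∘ Fin.castLE hgt, ⟨fun i => hT.1 _, fun i j hij => ?_⟩⟩
    exact hT.2 (fun hc => hij (Fin.castLE_injective _ hc))
  have : kappaS G S ≤ 1 := csSup_le ⟨0, h0⟩ hbd
  omega

end Aux

/-- If `G` is a finite simple graph of order `n` and size `e(G)` with `κ₃(G) = 2`,
then `e(G) ≥ (6/5)·n`, i.e. `5·e(G) ≥ 6·n`. -/
theorem size_lower_bound_of_kappa3_eq_two {V : Type*} [Fintype V]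
    (G : SimpleGraph V) (h : kappa3 G = 2) :
    6 * Fintype.card V ≤ 5 * G.edgeSet.ncard := by
  classical
  -- the defining set of kappa3 is nonempty
  have hKne : {m : ℕ | ∃ S : Finset V, S.card = 3 ∧ kappaS G S = m}.Nonempty := by
    by_contra hK
    rw [Set.not_nonempty_iff_eq_empty] at hK
    rw [kappa3, hK, Nat.sInf_empty] at h
    omega
  -- there is a 3-set, so the vertex count is at least 3
  have hcard3 : 3 ≤ Fintype.card V := by
    have h2 : (2 : ℕ) ∈ {m : ℕ | ∃ S : Finset V, S.card = 3 ∧ kappaS G S = m} := by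
      rw [← h, kappa3]; exact Nat.sInf_mem hKne
    obtain ⟨S, hS, -⟩ := h2
    calc 3 = S.card := hS.symm
    _ ≤ (Finset.univ : Finset V).card := Finset.card_le_card (Finset.subset_univ S)
    _ = Fintype.card V := Finset.card_univ
  -- every 3-set admits two internally disjoint S-trees
  have hall : ∀ S : Finset V, S.card = 3 →
      ∃ T : Fin 2 → G.Subgraph, IsInternallyDisjointSTreeFamily G S T := by
    intro S hS
    apply aux_exists_two_trees
    have : kappaS G S ∈ {m : ℕ | ∃ S : Finset V, S.card = 3 ∧ kappaS G S = m} :=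
      ⟨S, hS, rfl⟩
    have := Nat.sInf_le this
    rw [kappa3] at h
    omega
  -- how to build a 3-set containing two given distinct vertices
  have hext : ∀ (s : Finset V), s.card ≤ 2 → ∃ w, w ∉ s := by
    intro s hs
    by_contra hw
    push_neg at hw
    have : (Finset.univ : Finset V) ⊆ s := fun x _ => hw x
    have := Finset.card_le_card this
    rw [Finset.card_univ] at this
    omega
  -- minimum degree at least 2
  have hdeg2 : ∀ v : V, 2 ≤ G.degree v := by
    intro v
    obtain ⟨x, hx⟩ := hext {v} (by simp)
    obtain ⟨y, hy⟩ := hext {v, x} (Finset.card_insert_le _ _ |>.trans (by simp))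
    simp only [Finset.mem_insert, Finset.mem_singleton, not_or] at hx hy
    have hxv : x ≠ v := hx
    have hyv : y ≠ v := hy.1
    have hyx : y ≠ x := hy.2
    have hScard : ({v, x, y} : Finset V).card = 3 := by
      rw [Finset.card_insert_of_notMem (by simp [hxv.symm, hyv.symm]),
        Finset.card_insert_of_notMem (by simp [hyx.symm])]
      simp
    obtain ⟨T, hT⟩ := hall {v, x, y} hScard
    have hsub0 := (hT.1 0).2
    have hsub1 := (hT.1 1).2
    have hv0 : v ∈ (T 0).verts := hsub0 (by simp)
    have hx0 : x ∈ (T 0).verts := hsub0 (by simp)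
    have hv1 : v ∈ (T 1).verts := hsub1 (by simp)
    have hx1 : x ∈ (T 1).verts := hsub1 (by simp)
    obtain ⟨z0, hz0⟩ := aux_exists_adj (T 0) (hT.1 0).1.isConnected hv0 hx0 hxv.symm
    obtain ⟨z1, hz1⟩ := aux_exists_adj (T 1) (hT.1 1).1.isConnected hv1 hx1 hxv.symm
    have hdisj : Disjoint (T 0).edgeSet (T 1).edgeSet :=
      (hT.2 (show (0 : Fin 2) ≠ 1 by decide)).2
    have hzz : z0 ≠ z1 := by
      intro hzz
      subst hzz
      exact (Set.disjoint_left.mp hdisj (Subgraph.mem_edgeSet.mpr hz0))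
        (Subgraph.mem_edgeSet.mpr hz1)
    have h0 : z0 ∈ G.neighborFinset v := by
      rw [SimpleGraph.mem_neighborFinset]; exact hz0.adj_sub
    have h1 : z1 ∈ G.neighborFinset v := by
      rw [SimpleGraph.mem_neighborFinset]; exact hz1.adj_sub
    have : ({z0, z1} : Finset V) ⊆ G.neighborFinset v := by
      intro t ht
      simp only [Finset.mem_insert, Finset.mem_singleton] at ht
      rcases ht with rfl | rfl <;> assumption
    have := Finset.card_le_card this
    rw [Finset.card_insert_of_notMem (by simp [hzz]), Finset.card_singleton] at this
    exact this
  -- no two adjacent vertices both of degree 2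
  have hnoadj : ∀ u v : V, G.Adj u v → G.degree u = 2 → G.degree v ≠ 2 := by
    intro u v huv hdu hdv
    have huv' : u ≠ v := huv.ne
    -- the other neighbor a of u
    obtain ⟨a, hav, hnfu⟩ : ∃ a, a ≠ v ∧ G.neighborFinset u = {v, a} := by
      obtain ⟨x, y, hxy, hset⟩ := Finset.card_eq_two.mp hdu
      have hv : v ∈ G.neighborFinset u := by
        rw [SimpleGraph.mem_neighborFinset]; exact huv
      rw [hset] at hv
      simp only [Finset.mem_insert, Finset.mem_singleton] at hv
      rcases hv with rfl | rfl
      · exact ⟨y, hxy.symm, by rw [hset]⟩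
      · exact ⟨x, hxy, by rw [hset, Finset.pair_comm]⟩
    obtain ⟨b, hbu, hnfv⟩ : ∃ b, b ≠ u ∧ G.neighborFinset v = {u, b} := by
      obtain ⟨x, y, hxy, hset⟩ := Finset.card_eq_two.mp hdv
      have hu : u ∈ G.neighborFinset v := by
        rw [SimpleGraph.mem_neighborFinset]; exact huv.symm
      rw [hset] at hu
      simp only [Finset.mem_insert, Finset.mem_singleton] at hu
      rcases hu with rfl | rfl
      · exact ⟨y, hxy.symm, by rw [hset]⟩
      · exact ⟨x, hxy, by rw [hset, Finset.pair_comm]⟩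
    have hu_nbhd : ∀ x, G.Adj u x → x = v ∨ x = a := by
      intro x hx
      have : x ∈ G.neighborFinset u := by
        rw [SimpleGraph.mem_neighborFinset]; exact hx
      rw [hnfu] at this
      simpa using this
    have hv_nbhd : ∀ y, G.Adj v y → y = u ∨ y = b := by
      intro y hy
      have : y ∈ G.neighborFinset v := by
        rw [SimpleGraph.mem_neighborFinset]; exact hy
      rw [hnfv] at this
      simpa using this
    -- pick a third vertex w
    obtain ⟨w, hw⟩ := hext {u, v} (Finset.card_insert_le _ _ |>.trans (by simp))
    simp only [Finset.mem_insert, Finset.mem_singleton, not_or] at hw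
    have hwu : w ≠ u := hw.1
    have hwv : w ≠ v := hw.2
    have hScard : ({u, v, w} : Finset V).card = 3 := by
      rw [Finset.card_insert_of_notMem (by simp [huv', hwu.symm]),
        Finset.card_insert_of_notMem (by simp [hwv.symm])]
      simp
    obtain ⟨T, hT⟩ := hall {u, v, w} hScard
    have hsub0 := (hT.1 0).2
    have hsub1 := (hT.1 1).2
    have hdisj : Disjoint (T 0).edgeSet (T 1).edgeSet :=
      (hT.2 (show (0 : Fin 2) ≠ 1 by decide)).2
    by_cases hc : s(u, v) ∈ (T 1).edgeSet
    · have hc0 : s(u, v) ∉ (T 0).edgeSet := fun hh => Set.disjoint_left.mp hdisj hh hc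
      exact aux_core (T 1) (T 0) (hT.1 1).1.isConnected (hT.1 0).1.isConnected
        huv' hwv hwu hav hbu hu_nbhd hv_nbhd
        (hsub1 (by simp)) (hsub1 (by simp)) (hsub1 (by simp))
        (hsub0 (by simp)) (hsub0 (by simp)) hdisj.symm hc0
    · exact aux_core (T 0) (T 1) (hT.1 0).1.isConnected (hT.1 1).1.isConnected
        huv' hwv hwu hav hbu hu_nbhd hv_nbhd
        (hsub0 (by simp)) (hsub0 (by simp)) (hsub0 (by simp))
        (hsub1 (by simp)) (hsub1 (by simp)) hdisj hc
  -- counting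
  set A : Finset V := Finset.univ.filter (fun v => G.degree v = 2) with hAdef
  set B : Finset V := Finset.univ.filter (fun v => ¬ G.degree v = 2) with hBdef
  have hABcard : A.card + B.card = Fintype.card V := by
    rw [hAdef, hBdef, Finset.card_filter_add_card_filter_not, Finset.card_univ]
  have hsplit : ∑ v ∈ A, G.degree v + ∑ v ∈ B, G.degree v = ∑ v, G.degree v := by
    rw [hAdef, hBdef, Finset.sum_filter_add_sum_filter_not]
  have hsumA : ∑ v ∈ A, G.degree v = 2 * A.card := by
    rw [Finset.sum_congr rfl (fun v hv => (Finset.mem_filter.mp hv).2),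
      Finset.sum_const, smul_eq_mul, mul_comm]
  have hsumB3 : 3 * B.card ≤ ∑ v ∈ B, G.degree v := by
    rw [mul_comm, ← smul_eq_mul]
    apply Finset.card_nsmul_le_sum
    intro v hv
    have h1 := hdeg2 v
    have h2 := (Finset.mem_filter.mp hv).2
    omega
  have hsumB2 : 2 * A.card ≤ ∑ v ∈ B, G.degree v := by
    have e1 : ∀ v ∈ A, (B.filter (fun x => G.Adj v x)).card = 2 := by
      intro v hv
      have hdv := (Finset.mem_filter.mp hv).2
      have : B.filter (fun x => G.Adj v x) = G.neighborFinset v := by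
        ext x
        simp only [Finset.mem_filter, SimpleGraph.mem_neighborFinset, hBdef,
          Finset.mem_univ, true_and]
        constructor
        · exact fun hx => hx.2
        · exact fun hx => ⟨hnoadj v x hx hdv, hx⟩
      rw [this]
      exact hdv
    have e2 : ∑ v ∈ A, (B.filter (fun x => G.Adj v x)).card
        = ∑ u ∈ B, (A.filter (fun x => G.Adj u x)).card := by
      simp only [Finset.card_filter]
      rw [Finset.sum_comm]
      apply Finset.sum_congr rfl
      intro u _
      apply Finset.sum_congr rfl
      intro v _
      simp [SimpleGraph.adj_comm]
    have e3 : ∀ u ∈ B, (A.filter (fun x => G.Adj u x)).card ≤ G.degree u := by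
      intro u _
      rw [SimpleGraph.degree]
      apply Finset.card_le_card
      intro x hx
      rw [SimpleGraph.mem_neighborFinset]
      exact (Finset.mem_filter.mp hx).2
    calc 2 * A.card = ∑ _v ∈ A, 2 := by rw [Finset.sum_const, smul_eq_mul, mul_comm]
    _ = ∑ v ∈ A, (B.filter (fun x => G.Adj v x)).card :=
        (Finset.sum_congr rfl (fun v hv => (e1 v hv).symm))
    _ = ∑ u ∈ B, (A.filter (fun x => G.Adj u x)).card := e2
    _ ≤ ∑ u ∈ B, G.degree u := Finset.sum_le_sum e3
  have hsum2e : ∑ v, G.degree v = 2 * G.edgeFinset.card :=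
    SimpleGraph.sum_degrees_eq_twice_card_edges G
  have hncard : G.edgeSet.ncard = G.edgeFinset.card := by
    rw [← SimpleGraph.coe_edgeFinset, Set.ncard_coe_finset]
  rw [hncard]
  omega
end

section
/- If G is a finite simple graph of order n (number of vertices) and size e(G) (number of edges) with κ₃(G) = 2, then e(G) ≥ ⌈(6/5)·n⌉, where ⌈·⌉ denotes the ceiling function. -/
open SimpleGraph

section lemmas
variable {V : Type*} {G : SimpleGraph V}

lemma exists_two_trees (h : kappa3 G = 2) {S : Finset V} (hS : S.card = 3) :
    ∃ T : Fin 2 → G.Subgraph, IsInternallyDisjointSTreeFamily G S T := by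
  have h0 : (0:ℕ) ∈ {ℓ : ℕ | ∃ T : Fin ℓ → G.Subgraph, IsInternallyDisjointSTreeFamily G S T} :=
    ⟨fun i => i.elim0, fun i => i.elim0, fun i j _ => i.elim0⟩
  have hmem : kappaS G S ∈ {m | ∃ S : Finset V, S.card = 3 ∧ kappaS G S = m} := ⟨S, hS, rfl⟩
  have h2 : 2 ≤ kappaS G S := h ▸ Nat.sInf_le hmem
  have hbdd : BddAbove {ℓ : ℕ | ∃ T : Fin ℓ → G.Subgraph, IsInternallyDisjointSTreeFamily G S T} := by
    by_contra hb
    have h3 : kappaS G S = sSup (∅ : Set ℕ) := csSup_of_not_bddAbove hb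
    rw [csSup_empty] at h3
    rw [h3, Nat.bot_eq_zero] at h2
    omega
  have hk : kappaS G S ∈ {ℓ : ℕ | ∃ T : Fin ℓ → G.Subgraph, IsInternallyDisjointSTreeFamily G S T} :=
    Nat.sSup_mem ⟨0, h0⟩ hbdd
  obtain ⟨T, hT⟩ := hk
  exact ⟨fun i => T (Fin.castLE h2 i), fun i => hT.1 _, fun i j hij =>
    hT.2 (fun e => hij (Fin.castLE_injective _ e))⟩

lemma three_le_card [Fintype V] (h : kappa3 G = 2) : 3 ≤ Fintype.card V := by
  have hne : {m | ∃ S : Finset V, S.card = 3 ∧ kappaS G S = m}.Nonempty := by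
    by_contra hc
    rw [Set.not_nonempty_iff_eq_empty] at hc
    rw [kappa3, hc, Nat.sInf_empty] at h
    omega
  obtain ⟨S, hS, -⟩ := Nat.sInf_mem hne
  calc 3 = S.card := hS.symm
    _ ≤ Fintype.card V := by simpa using S.card_le_univ
end lemmas

section helpers
variable {V : Type*} {G : SimpleGraph V}

lemma walk_mem_pair {α : Type*} {H : SimpleGraph α} {u v : α}
    (hu : ∀ x, H.Adj u x → x = v) (hv : ∀ x, H.Adj v x → x = u) :
    ∀ {s t : α}, H.Walk s t → (s = u ∨ s = v) → (t = u ∨ t = v) := by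
  intro s t p
  induction p with
  | nil => exact id
  | cons h p ih =>
      intro hs
      rcases hs with rfl | rfl
      · exact ih (Or.inr (hu _ h))
      · exact ih (Or.inl (hv _ h))

lemma exists_adj_of_tree {T : G.Subgraph} (ht : T.coe.IsTree) {u w : V}
    (hu : u ∈ T.verts) (hw : w ∈ T.verts) (hne : w ≠ u) :
    ∃ x, T.Adj u x := by
  obtain ⟨p⟩ := ht.isConnected.preconnected ⟨u, hu⟩ ⟨w, hw⟩
  cases p with
  | nil => exact (hne rfl).elim
  | cons h q => exact ⟨_, h⟩
end helpers
section deg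
variable {V : Type*} {G : SimpleGraph V}

lemma two_le_degree [Fintype V] [DecidableRel G.Adj] (h : kappa3 G = 2) (u : V) :
    2 ≤ G.degree u := by
  classical
  obtain ⟨S, hsub, hS⟩ := Finset.exists_superset_card_eq (s := {u}) (n := 3)
    (by simp) (three_le_card h)
  obtain ⟨T, hT⟩ := exists_two_trees h hS
  have huS : u ∈ (S : Set V) := hsub (Finset.mem_singleton_self u)
  obtain ⟨w, hwS, hwu⟩ : ∃ w ∈ S, w ≠ u := by
    by_contra hc
    push_neg at hc
    have : S ⊆ {u} := fun x hx => Finset.mem_singleton.mpr (hc x hx)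
    have := Finset.card_le_card this
    simp [hS] at this
  have key : ∀ i : Fin 2, ∃ x, (T i).Adj u x := fun i =>
    exists_adj_of_tree (hT.1 i).1 ((hT.1 i).2 huS) ((hT.1 i).2 hwS) hwu
  obtain ⟨x0, hx0⟩ := key 0
  obtain ⟨x1, hx1⟩ := key 1
  have hdisj := (hT.2 (show (0 : Fin 2) ≠ 1 by decide)).2
  have hne : x0 ≠ x1 := by
    rintro rfl
    exact Set.disjoint_left.mp hdisj (SimpleGraph.Subgraph.mem_edgeSet.mpr hx0)
      (SimpleGraph.Subgraph.mem_edgeSet.mpr hx1)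
  have hsub2 : ({x0, x1} : Finset V) ⊆ G.neighborFinset u := by
    intro x hx
    rcases Finset.mem_insert.mp hx with rfl | hx
    · exact (SimpleGraph.mem_neighborFinset _ _ _).mpr ((T 0).adj_sub hx0)
    · rw [Finset.mem_singleton] at hx; subst hx
      exact (SimpleGraph.mem_neighborFinset _ _ _).mpr ((T 1).adj_sub hx1)
  have := Finset.card_le_card hsub2
  rwa [Finset.card_insert_of_notMem (by simp [hne]), Finset.card_singleton] at this
end deg
section indep
variable {V : Type*} {G : SimpleGraph V}

lemma tree_confined {T : G.Subgraph} (ht : T.coe.IsTree) {u v w : V}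
    (hu : u ∈ T.verts) (hv : v ∈ T.verts) (hw : w ∈ T.verts)
    (hadjU : ∀ x, T.Adj u x → x = v) (hadjV : ∀ x, T.Adj v x → x = u) :
    w = u ∨ w = v := by
  obtain ⟨p⟩ := ht.isConnected.preconnected ⟨u, hu⟩ ⟨w, hw⟩
  have key := walk_mem_pair (u := (⟨u, hu⟩ : T.verts)) (v := (⟨v, hv⟩ : T.verts))
    (fun x hx => Subtype.ext (hadjU x.1 hx)) (fun x hx => Subtype.ext (hadjV x.1 hx))
    p (Or.inl rfl)
  rcases key with h | h
  · exact Or.inl (congrArg Subtype.val h)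
  · exact Or.inr (congrArg Subtype.val h)

/-- Core symmetric lemma: `T₁` is a tree containing `u, v, w`, containing the edge `uv`,
`T₂` is a tree containing `u, v, w` edge-disjoint from `T₁`, and `u, v` both have
degree-2 neighbor structures. Contradiction. -/
lemma core_contradiction {T₁ T₂ : G.Subgraph} (ht₁ : T₁.coe.IsTree) (ht₂ : T₂.coe.IsTree)
    {u v w a b : V}
    (hu₁ : u ∈ T₁.verts) (hv₁ : v ∈ T₁.verts) (hw₁ : w ∈ T₁.verts)
    (hu₂ : u ∈ T₂.verts) (hv₂ : v ∈ T₂.verts) (hw₂ : w ∈ T₂.verts)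
    (hwu : w ≠ u) (hwv : w ≠ v)
    (hNu : ∀ x, G.Adj u x → x = v ∨ x = a)
    (hNv : ∀ x, G.Adj v x → x = u ∨ x = b)
    (hdisj : Disjoint T₁.edgeSet T₂.edgeSet)
    (huv : T₁.Adj u v) : False := by
  -- T₂ has an edge at u; it cannot be uv, so it is ua, hence ua ∉ T₁
  obtain ⟨x, hx⟩ := exists_adj_of_tree ht₂ hu₂ hw₂ hwu
  have hxa : x = a := by
    rcases hNu x (T₂.adj_sub hx) with rfl | rfl
    · exact absurd (Set.disjoint_left.mp hdisj (SimpleGraph.Subgraph.mem_edgeSet.mpr huv)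
        (SimpleGraph.Subgraph.mem_edgeSet.mpr hx)) (fun h => h)
    · rfl
  subst hxa
  have hua1 : ¬ T₁.Adj u x := fun hc =>
    Set.disjoint_left.mp hdisj (SimpleGraph.Subgraph.mem_edgeSet.mpr hc)
      (SimpleGraph.Subgraph.mem_edgeSet.mpr hx)
  -- T₂ has an edge at v; it cannot be vu, so it is vb, hence vb ∉ T₁
  obtain ⟨y, hy⟩ := exists_adj_of_tree ht₂ hv₂ hw₂ hwv
  have hyb : y = b := by
    rcases hNv y (T₂.adj_sub hy) with rfl | rfl
    · exact absurd (Set.disjoint_left.mp hdisj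
        (SimpleGraph.Subgraph.mem_edgeSet.mpr huv.symm)
        (SimpleGraph.Subgraph.mem_edgeSet.mpr hy)) (fun h => h)
    · rfl
  subst hyb
  have hvb1 : ¬ T₁.Adj v y := fun hc =>
    Set.disjoint_left.mp hdisj (SimpleGraph.Subgraph.mem_edgeSet.mpr hc)
      (SimpleGraph.Subgraph.mem_edgeSet.mpr hy)
  -- in T₁, the only neighbor of u is v and the only neighbor of v is u
  have hadjU : ∀ z, T₁.Adj u z → z = v := by
    intro z hz
    rcases hNu z (T₁.adj_sub hz) with rfl | rfl
    · rfl
    · exact absurd hz hua1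
  have hadjV : ∀ z, T₁.Adj v z → z = u := by
    intro z hz
    rcases hNv z (T₁.adj_sub hz) with rfl | rfl
    · rfl
    · exact absurd hz hvb1
  rcases tree_confined ht₁ hu₁ hv₁ hw₁ hadjU hadjV with h | h
  · exact hwu h
  · exact hwv h
end indep
section notadj
variable {V : Type*} {G : SimpleGraph V}

lemma neighbor_structure [Fintype V] [DecidableRel G.Adj] {u v : V}
    (hdu : G.degree u = 2) (huv : G.Adj u v) :
    ∃ a, a ≠ v ∧ (∀ x, G.Adj u x → x = v ∨ x = a) := by
  classical
  obtain ⟨x, y, hxy, hN⟩ := Finset.card_eq_two.mp hdu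
  have hv : v ∈ G.neighborFinset u := (SimpleGraph.mem_neighborFinset _ _ _).mpr huv
  rw [hN] at hv
  rcases Finset.mem_insert.mp hv with rfl | hv
  · exact ⟨y, fun h => hxy h.symm, fun z hz => by
      have : z ∈ G.neighborFinset u := (SimpleGraph.mem_neighborFinset _ _ _).mpr hz
      rw [hN] at this
      simpa using this⟩
  · rw [Finset.mem_singleton] at hv
    subst hv
    exact ⟨x, fun h => hxy h, fun z hz => by
      have : z ∈ G.neighborFinset u := (SimpleGraph.mem_neighborFinset _ _ _).mpr hz
      rw [hN] at this
      rcases Finset.mem_insert.mp this with rfl | h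
      · exact Or.inr rfl
      · exact Or.inl (Finset.mem_singleton.mp h)⟩

lemma not_adj_of_deg_two [Fintype V] [DecidableRel G.Adj] (h : kappa3 G = 2) {u v : V}
    (hdu : G.degree u = 2) (hdv : G.degree v = 2) (huv : G.Adj u v) : False := by
  classical
  obtain ⟨a, hav, hNu⟩ := neighbor_structure hdu huv
  obtain ⟨b, hbu, hNv⟩ := neighbor_structure hdv huv.symm
  -- pick S ⊇ {u, v} of card 3
  have huvne : u ≠ v := huv.ne
  obtain ⟨S, hsub, hS⟩ := Finset.exists_superset_card_eq (s := {u, v}) (n := 3)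
    (by rw [Finset.card_insert_of_notMem (by simp [huvne])]; simp) (three_le_card h)
  obtain ⟨w, hwS, hwuv⟩ : ∃ w ∈ S, w ∉ ({u, v} : Finset V) := by
    by_contra hc
    push_neg at hc
    have hle := Finset.card_le_card hc
    have : ({u, v} : Finset V).card ≤ 2 := Finset.card_insert_le _ _ |>.trans (by simp)
    omega
  have hwu : w ≠ u := fun e => hwuv (by simp [e])
  have hwv : w ≠ v := fun e => hwuv (by simp [e])
  obtain ⟨T, hT⟩ := exists_two_trees h hS
  have huS : u ∈ (S : Set V) := hsub (by simp)
  have hvS : v ∈ (S : Set V) := hsub (by simp)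
  have hwS' : w ∈ (S : Set V) := hwS
  have hmem : ∀ i : Fin 2, u ∈ (T i).verts ∧ v ∈ (T i).verts ∧ w ∈ (T i).verts :=
    fun i => ⟨(hT.1 i).2 huS, (hT.1 i).2 hvS, (hT.1 i).2 hwS'⟩
  have hdisj := (hT.2 (show (0 : Fin 2) ≠ 1 by decide)).2
  -- one of the trees contains the edge uv
  have huv01 : (T 0).Adj u v ∨ (T 1).Adj u v := by
    obtain ⟨x0, hx0⟩ := exists_adj_of_tree (hT.1 0).1 (hmem 0).1 (hmem 0).2.2 hwu
    obtain ⟨x1, hx1⟩ := exists_adj_of_tree (hT.1 1).1 (hmem 1).1 (hmem 1).2.2 hwu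
    rcases hNu x0 ((T 0).adj_sub hx0) with rfl | rfl
    · exact Or.inl hx0
    · rcases hNu x1 ((T 1).adj_sub hx1) with rfl | rfl
      · exact Or.inr hx1
      · exact absurd (Set.disjoint_left.mp hdisj (SimpleGraph.Subgraph.mem_edgeSet.mpr hx0)
          (SimpleGraph.Subgraph.mem_edgeSet.mpr hx1)) (fun h => h)
  rcases huv01 with hc | hc
  · exact core_contradiction (hT.1 0).1 (hT.1 1).1 (hmem 0).1 (hmem 0).2.1 (hmem 0).2.2
      (hmem 1).1 (hmem 1).2.1 (hmem 1).2.2 hwu hwv hNu hNv hdisj hc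
  · exact core_contradiction (hT.1 1).1 (hT.1 0).1 (hmem 1).1 (hmem 1).2.1 (hmem 1).2.2
      (hmem 0).1 (hmem 0).2.1 (hmem 0).2.2 hwu hwv hNu hNv hdisj.symm hc
end notadj

/-- If `G` is a finite simple graph of order `n` and size `e(G)` with `κ₃(G) = 2`,
then `e(G) ≥ ⌈(6/5)·n⌉`. -/
theorem size_ceil_lower_bound_of_kappa3_eq_two {V : Type*} [Fintype V]
    (G : SimpleGraph V) (h : kappa3 G = 2) :
    ⌈(6 * (Fintype.card V : ℚ)) / 5⌉ ≤ (G.edgeSet.ncard : ℤ) := by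
  classical
  set n := Fintype.card V with hn
  set e := G.edgeFinset.card with he
  have hecard : G.edgeSet.ncard = e := by
    rw [Set.ncard_eq_toFinset_card']
    simp [he, SimpleGraph.edgeFinset]
  set D : Finset V := Finset.univ.filter (fun v => G.degree v = 2) with hD
  have hdeg2 : ∀ v, 2 ≤ G.degree v := two_le_degree h
  have hsum : ∑ v, G.degree v = 2 * e := G.sum_degrees_eq_twice_card_edges
  have hsplit : ∑ v ∈ D, G.degree v + ∑ v ∈ Dᶜ, G.degree v = 2 * e := by
    rw [Finset.sum_add_sum_compl]; exact hsum
  have h1 : ∑ v ∈ D, G.degree v = 2 * D.card := by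
    rw [Finset.sum_congr rfl (fun v hv => by
      simpa [hD] using (Finset.mem_filter.mp hv).2)]
    simp [mul_comm]
  have h2 : 3 * Dᶜ.card ≤ ∑ v ∈ Dᶜ, G.degree v := by
    have key := Finset.card_nsmul_le_sum Dᶜ (fun v => G.degree v) 3 (fun v hv => by
      show 3 ≤ G.degree v
      have hne2 : G.degree v ≠ 2 := by
        simp only [hD, Finset.mem_compl, Finset.mem_filter, Finset.mem_univ,
          true_and] at hv
        exact hv
      have := hdeg2 v
      omega)
    simpa [smul_eq_mul, mul_comm] using key
  have h3 : ∑ v ∈ D, G.degree v ≤ ∑ v ∈ Dᶜ, G.degree v := by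
    have hmaps : ∀ p ∈ D.sigma (fun v => G.neighborFinset v),
        (⟨p.2, p.1⟩ : Σ _ : V, V) ∈ Dᶜ.sigma (fun v => G.neighborFinset v) := by
      rintro ⟨x, y⟩ hp
      rw [Finset.mem_sigma] at hp ⊢
      obtain ⟨hx, hy⟩ := hp
      have hadj : G.Adj x y := (SimpleGraph.mem_neighborFinset _ _ _).mp hy
      have hdx : G.degree x = 2 := by simpa [hD] using hx
      constructor
      · rw [Finset.mem_compl]
        intro hyD
        have hdy : G.degree y = 2 := by simpa [hD] using hyD
        exact not_adj_of_deg_two h hdx hdy hadj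
      · exact (SimpleGraph.mem_neighborFinset _ _ _).mpr hadj.symm
    have hinj : Set.InjOn (fun p : Σ _ : V, V => (⟨p.2, p.1⟩ : Σ _ : V, V))
        (D.sigma (fun v => G.neighborFinset v)) := by
      rintro ⟨x1, y1⟩ - ⟨x2, y2⟩ - heq
      have e1 : y1 = y2 := congrArg Sigma.fst heq
      have e2 : x1 = x2 := congrArg Sigma.snd heq
      subst e1; subst e2; rfl
    have := Finset.card_le_card_of_injOn _ hmaps hinj
    rw [Finset.card_sigma, Finset.card_sigma] at this
    exact this
  have hcards : D.card + Dᶜ.card = n := by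
    rw [Finset.card_add_card_compl]
  have h6n : 6 * n ≤ 5 * e := by omega
  rw [hecard]
  rw [Int.ceil_le]
  rw [div_le_iff₀ (by norm_num)]
  push_cast
  have : (6 : ℚ) * n ≤ 5 * e := by exact_mod_cast h6n
  linarith
end

section
/- Let G be a finite simple graph with at least 3 vertices such that κ₃(G) = 2. Then every vertex of G has degree at least 2, and the set X of vertices of degree exactly 2 in G is a stable (independent) set, i.e. no two vertices of degree 2 are adjacent in G. -/
open SimpleGraph

/-- A tree subgraph containing two distinct vertices has an edge at each of them. -/
lemma aux_exists_adj_s14 {V : Type*} {G : SimpleGraph V} {T : G.Subgraph}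
    (ht : T.coe.IsTree) {a b : V} (ha : a ∈ T.verts) (hb : b ∈ T.verts)
    (hab : a ≠ b) : ∃ c, T.Adj a c := by
  obtain ⟨p⟩ := ht.isConnected.preconnected ⟨a, ha⟩ ⟨b, hb⟩
  cases p with
  | nil => exact absurd rfl hab
  | cons h q => exact ⟨_, (SimpleGraph.Subgraph.coe_adj _ _ _) ▸ h⟩

lemma aux_not_both {V : Type*} {G : SimpleGraph V} {T₁ T₂ : G.Subgraph}
    (hd : Disjoint T₁.edgeSet T₂.edgeSet) {a c : V}
    (h1 : T₁.Adj a c) (h2 : T₂.Adj a c) : False :=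
  Set.disjoint_left.mp hd (SimpleGraph.Subgraph.mem_edgeSet.mpr h1)
    (SimpleGraph.Subgraph.mem_edgeSet.mpr h2)

/-- If a vertex `c` has degree 2 in `G`, `T₁` and `T₂` have disjoint edge sets,
`T₁.Adj c d` and `T₂` has some edge at `c`, then `d` is the unique `T₁`-neighbor of `c`. -/
lemma aux_only_nbr {V : Type*} [Fintype V] {G : SimpleGraph V} [DecidableRel G.Adj]
    {T₁ T₂ : G.Subgraph} (hd : Disjoint T₁.edgeSet T₂.edgeSet)
    {c d : V} (h1 : T₁.Adj c d) (h2 : ∃ b, T₂.Adj c b) (hdeg : G.degree c = 2) :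
    ∀ a, T₁.Adj c a → a = d := by
  classical
  obtain ⟨b, hb⟩ := h2
  intro a ha
  by_contra hne
  have hbd : b ≠ d := fun h => aux_not_both hd h1 (h ▸ hb)
  have hba : b ≠ a := fun h => aux_not_both hd ha (h ▸ hb)
  have hsub : ({d, a, b} : Finset V) ⊆ G.neighborFinset c := by
    intro x hx
    simp only [Finset.mem_insert, Finset.mem_singleton] at hx
    rcases hx with rfl | rfl | rfl
    · exact (SimpleGraph.mem_neighborFinset _ _ _).mpr h1.adj_sub
    · exact (SimpleGraph.mem_neighborFinset _ _ _).mpr ha.adj_sub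
    · exact (SimpleGraph.mem_neighborFinset _ _ _).mpr hb.adj_sub
  have h3 : ({d, a, b} : Finset V).card = 3 := by
    rw [Finset.card_insert_of_notMem (by simp [Ne.symm hne, hbd.symm]),
      Finset.card_insert_of_notMem (by simp [hba.symm]), Finset.card_singleton]
  have := Finset.card_le_card hsub
  rw [h3] at this
  unfold SimpleGraph.degree at hdeg
  omega

/-- If in a connected subgraph `T` the only neighbor of `u` is `v` and vice versa,
then `T` cannot contain a third vertex `w`. -/
lemma aux_trapped {V : Type*} {G : SimpleGraph V} {T : G.Subgraph}
    (ht : T.coe.IsTree) {u v w : V} (hu : u ∈ T.verts) (hw : w ∈ T.verts)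
    (h1 : ∀ a, T.Adj u a → a = v) (h2 : ∀ a, T.Adj v a → a = u)
    (hwu : w ≠ u) (hwv : w ≠ v) : False := by
  obtain ⟨p⟩ := ht.isConnected.preconnected ⟨u, hu⟩ ⟨w, hw⟩
  have key : ∀ {x y : T.verts} (_ : T.coe.Walk x y),
      ((x : V) = u ∨ (x : V) = v) → ((y : V) = u ∨ (y : V) = v) := by
    intro x y p
    induction p with
    | nil => exact id
    | cons h q ih =>
      rename_i x' z' y'
      intro hx
      have hadj : T.Adj (x' : V) (z' : V) := (SimpleGraph.Subgraph.coe_adj _ _ _) ▸ h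
      rcases hx with hx | hx
      · exact ih (Or.inr (h1 _ (hx ▸ hadj)))
      · exact ih (Or.inl (h2 _ (hx ▸ hadj)))
  rcases key p (Or.inl rfl) with h | h
  · exact hwu h
  · exact hwv h

/-- From `κ₃(G) = 2` we get, for any 3-set `S`, two internally disjoint `S`-trees. -/
lemma aux_exists_two_trees_s14 {V : Type*} [Fintype V] (G : SimpleGraph V)
    (h : kappa3 G = 2) (S : Finset V) (hS : S.card = 3) :
    ∃ T₁ T₂ : G.Subgraph, T₁.coe.IsTree ∧ (S : Set V) ⊆ T₁.verts ∧
      T₂.coe.IsTree ∧ (S : Set V) ⊆ T₂.verts ∧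
      Disjoint T₁.edgeSet T₂.edgeSet := by
  classical
  have hmem : kappaS G S ∈ {m : ℕ | ∃ S : Finset V, S.card = 3 ∧ kappaS G S = m} :=
    ⟨S, hS, rfl⟩
  have h2 : 2 ≤ kappaS G S := h ▸ Nat.sInf_le hmem
  set A := {ℓ : ℕ | ∃ T : Fin ℓ → G.Subgraph, IsInternallyDisjointSTreeFamily G S T} with hA
  have h0 : (0 : ℕ) ∈ A := ⟨Fin.elim0, fun i => i.elim0, fun i => i.elim0⟩
  have hbdd : BddAbove A := by
    refine ⟨Fintype.card (Sym2 V), fun ℓ hℓ => ?_⟩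
    obtain ⟨T, hT⟩ := hℓ
    have hS2 : ∃ a ∈ S, ∃ b ∈ S, a ≠ b := Finset.one_lt_card.mp (by omega)
    obtain ⟨a, haS, b, hbS, hab⟩ := hS2
    have hedge : ∀ i, ∃ e, e ∈ (T i).edgeSet := by
      intro i
      obtain ⟨c, hc⟩ := aux_exists_adj_s14 (hT.1 i).1 ((hT.1 i).2 haS) ((hT.1 i).2 hbS) hab
      exact ⟨s(a, c), SimpleGraph.Subgraph.mem_edgeSet.mpr hc⟩
    choose e he using hedge
    have hinj : Function.Injective e := by
      intro i j hij
      by_contra hne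
      exact Set.disjoint_left.mp (hT.2 hne).2 (he i) (hij ▸ he j)
    calc ℓ = Fintype.card (Fin ℓ) := (Fintype.card_fin ℓ).symm
      _ ≤ Fintype.card (Sym2 V) := Fintype.card_le_of_injective e hinj
  have hsup : sSup A ∈ A := Nat.sSup_mem ⟨0, h0⟩ hbdd
  have hge : 2 ≤ sSup A := h2
  obtain ⟨T, hT⟩ := hsup
  have hne : (⟨0, by omega⟩ : Fin (sSup A)) ≠ ⟨1, by omega⟩ := by
    simp [Fin.ext_iff]
  exact ⟨T ⟨0, by omega⟩, T ⟨1, by omega⟩, (hT.1 _).1, (hT.1 _).2, (hT.1 _).1,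
    (hT.1 _).2, (hT.2 hne).2⟩

/-- If `G` is a finite simple graph with at least 3 vertices and `κ₃(G) = 2`, then
every vertex of `G` has degree at least 2, and the set of vertices of degree exactly
2 is a stable (independent) set: no two vertices of degree 2 are adjacent. -/
theorem degree_two_vertices_stable_of_kappa3_eq_two {V : Type*} [Fintype V]
    (G : SimpleGraph V) [DecidableRel G.Adj]
    (hcard : 3 ≤ Fintype.card V) (h : kappa3 G = 2) :
    (∀ v : V, 2 ≤ G.degree v) ∧
    (∀ u v : V, G.degree u = 2 → G.degree v = 2 → ¬ G.Adj u v) := by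
  classical
  constructor
  · intro v
    -- find two other vertices
    have hcard2 : 1 < (Finset.univ \ {v} : Finset V).card := by
      rw [Finset.card_sdiff_of_subset (Finset.subset_univ _)]
      simp only [Finset.card_singleton, Finset.card_univ]
      omega
    obtain ⟨a, ha, b, hb, hab⟩ := Finset.one_lt_card.mp hcard2
    simp only [Finset.mem_sdiff, Finset.mem_singleton, Finset.mem_univ, true_and] at ha hb
    have hScard : ({v, a, b} : Finset V).card = 3 := by
      rw [Finset.card_insert_of_notMem (by simp [Ne.symm ha, Ne.symm hb]),
        Finset.card_insert_of_notMem (by simp [hab]), Finset.card_singleton]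
    obtain ⟨T₁, T₂, ht₁, hs₁, ht₂, hs₂, hd⟩ := aux_exists_two_trees_s14 G h _ hScard
    have hv₁ : v ∈ T₁.verts := hs₁ (by simp)
    have ha₁ : a ∈ T₁.verts := hs₁ (by simp)
    have hv₂ : v ∈ T₂.verts := hs₂ (by simp)
    have ha₂ : a ∈ T₂.verts := hs₂ (by simp)
    obtain ⟨c₁, hc₁⟩ := aux_exists_adj_s14 ht₁ hv₁ ha₁ (Ne.symm ha)
    obtain ⟨c₂, hc₂⟩ := aux_exists_adj_s14 ht₂ hv₂ ha₂ (Ne.symm ha)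
    have hcc : c₁ ≠ c₂ := fun hcc => aux_not_both hd hc₁ (hcc ▸ hc₂)
    have : 1 < (G.neighborFinset v).card :=
      Finset.one_lt_card.mpr ⟨c₁, (SimpleGraph.mem_neighborFinset _ _ _).mpr hc₁.adj_sub,
        c₂, (SimpleGraph.mem_neighborFinset _ _ _).mpr hc₂.adj_sub, hcc⟩
    unfold SimpleGraph.degree
    omega
  · intro u v hdu hdv hadj
    have huv : u ≠ v := G.ne_of_adj hadj
    -- find a third vertex
    have hcard1 : 0 < (Finset.univ \ {u, v} : Finset V).card := by
      rw [Finset.card_sdiff_of_subset (Finset.subset_univ _)]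
      have : ({u, v} : Finset V).card ≤ 2 := Finset.card_insert_le _ _ |>.trans (by simp)
      rw [Finset.card_univ]
      omega
    obtain ⟨w, hw⟩ := Finset.card_pos.mp hcard1
    simp only [Finset.mem_sdiff, Finset.mem_insert, Finset.mem_singleton, Finset.mem_univ,
      true_and, not_or] at hw
    obtain ⟨hwu, hwv⟩ := hw
    have hScard : ({u, v, w} : Finset V).card = 3 := by
      rw [Finset.card_insert_of_notMem (by simp [huv, Ne.symm hwu]),
        Finset.card_insert_of_notMem (by simp [Ne.symm hwv]), Finset.card_singleton]
    obtain ⟨T₁, T₂, ht₁, hs₁, ht₂, hs₂, hd⟩ := aux_exists_two_trees_s14 G h _ hScard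
    have hu₁ : u ∈ T₁.verts := hs₁ (by simp)
    have hv₁ : v ∈ T₁.verts := hs₁ (by simp)
    have hw₁ : w ∈ T₁.verts := hs₁ (by simp)
    have hu₂ : u ∈ T₂.verts := hs₂ (by simp)
    have hv₂ : v ∈ T₂.verts := hs₂ (by simp)
    have hw₂ : w ∈ T₂.verts := hs₂ (by simp)
    obtain ⟨a₁, ha₁⟩ := aux_exists_adj_s14 ht₁ hu₁ hv₁ huv
    obtain ⟨a₂, ha₂⟩ := aux_exists_adj_s14 ht₂ hu₂ hv₂ huv
    obtain ⟨b₁, hb₁⟩ := aux_exists_adj_s14 ht₁ hv₁ hu₁ huv.symm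
    obtain ⟨b₂, hb₂⟩ := aux_exists_adj_s14 ht₂ hv₂ hu₂ huv.symm
    -- one of T₁, T₂ contains the edge uv
    have hkey : T₁.Adj u v ∨ T₂.Adj u v := by
      by_contra hcon
      push_neg at hcon
      have ha₁v : a₁ ≠ v := fun hh => hcon.1 (hh ▸ ha₁)
      have ha₂v : a₂ ≠ v := fun hh => hcon.2 (hh ▸ ha₂)
      have ha12 : a₁ ≠ a₂ := fun hh => aux_not_both hd ha₁ (hh ▸ ha₂)
      have hsub : ({v, a₁, a₂} : Finset V) ⊆ G.neighborFinset u := by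
        intro x hx
        simp only [Finset.mem_insert, Finset.mem_singleton] at hx
        rcases hx with rfl | rfl | rfl
        · exact (SimpleGraph.mem_neighborFinset _ _ _).mpr hadj
        · exact (SimpleGraph.mem_neighborFinset _ _ _).mpr ha₁.adj_sub
        · exact (SimpleGraph.mem_neighborFinset _ _ _).mpr ha₂.adj_sub
      have h3 : ({v, a₁, a₂} : Finset V).card = 3 := by
        rw [Finset.card_insert_of_notMem (by simp [Ne.symm ha₁v, Ne.symm ha₂v]),
          Finset.card_insert_of_notMem (by simp [ha12]), Finset.card_singleton]
      have := Finset.card_le_card hsub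
      rw [h3] at this
      unfold SimpleGraph.degree at hdu
      omega
    rcases hkey with hk | hk
    · exact aux_trapped ht₁ hu₁ hw₁
        (aux_only_nbr hd hk ⟨a₂, ha₂⟩ hdu)
        (aux_only_nbr hd hk.symm ⟨b₂, hb₂⟩ hdv) hwu hwv
    · exact aux_trapped ht₂ hu₂ hw₂
        (aux_only_nbr hd.symm hk ⟨a₁, ha₁⟩ hdu)
        (aux_only_nbr hd.symm hk.symm ⟨b₁, hb₁⟩ hdv) hwu hwv
end
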